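/- Let Q be a generalised quadrangle of order (s, s^2), s > 1 odd, and let H be a hemisystem of points of Q. Then the incidence structure with point set H and lines the lines of Q restricted to H is a partial quadrangle PQ((s−1)/2, s^2, (s−1)^2/2). -/

import Mathlib

/-- Two points are collinear in a point-line geometry: distinct and on a common line. -/
def Collin {P L : Type*} (mem : P → L → Prop) (p q : P) : Prop :=
  p ≠ q ∧ ∃ l, mem p l ∧ mem q l

/-- A generalised quadrangle of order `(s, t)`. -/
def IsGQ {P L : Type*} (mem : P → L → Prop) (s t : ℕ) : Prop :=
  (∀ p q l l', p ≠ q → mem p l → mem q l → mem p l' → mem q l' → l = l') ∧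
  (∀ l, Nat.card {p | mem p l} = s + 1) ∧
  (∀ p, Nat.card {l | mem p l} = t + 1) ∧
  (∀ p l, ¬ mem p l → ∃! q, mem q l ∧ Collin mem p q)

/-- A partial quadrangle `PQ(s, t, μ)`. -/
def IsPQ {P L : Type*} (mem : P → L → Prop) (s t μ : ℕ) : Prop :=
  (∀ p q l l', p ≠ q → mem p l → mem q l → mem p l' → mem q l' → l = l') ∧
  (∀ p q r, Collin mem p q → Collin mem q r → Collin mem p r →
    ∃ l, mem p l ∧ mem q l ∧ mem r l) ∧
  (∀ l, Nat.card {p | mem p l} = s + 1) ∧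
  (∀ p, Nat.card {l | mem p l} = t + 1) ∧
  (∀ p q, p ≠ q → ¬ Collin mem p q →
    Nat.card {r | Collin mem r p ∧ Collin mem r q} = μ)

/-!
Fix non-collinear points `p, q` of `H`. In a generalised quadrangle of order `(s, s²)` every point
`z` collinear with neither of them is collinear with exactly `s + 1` points of the trace
`{p, q}^⊥`: counting edges and paths of length two between the `s² + 1` points of the trace and
the points far from `p` and `q` shows that these numbers have mean `s + 1` and mean square
`(s + 1)²`, so they are constant. Counting the edges between the trace and the points of `H` far
from `p` and `q` once with this regularity and once along the lines through the points of the
trace, each of which meets `H` in `(s + 1) / 2` points, gives a linear equation which, together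
with `|H| = (s + 1) / 2 · (s³ + 1)`, yields `|H ∩ {p, q}^⊥| = (s - 1)² / 2`. The other axioms of a
partial quadrangle are inherited from the quadrangle.
-/

open Finset
open scoped Classical

section Incidence

variable {P L : Type*} {mem : P → L → Prop}

theorem Collin.symm {p q : P} (h : Collin mem p q) : Collin mem q p :=
  ⟨h.1.symm, h.2.imp fun _ hl => ⟨hl.2, hl.1⟩⟩

theorem collin_comm {p q : P} : Collin mem p q ↔ Collin mem q p :=
  ⟨Collin.symm, Collin.symm⟩

theorem collin_subtype_iff {H : Set P} {u v : H} :
    Collin (fun (x : H) l => mem x l) u v ↔ Collin mem u v := by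
  simp only [Collin, ne_eq, Subtype.ext_iff]

variable [Fintype P]

noncomputable def collinSet (mem : P → L → Prop) (x : P) : Finset P := {z | Collin mem z x}

noncomputable def farSet (mem : P → L → Prop) (p q : P) : Finset P :=
  {z | z ≠ p ∧ z ≠ q ∧ ¬Collin mem z p ∧ ¬Collin mem z q}

@[simp]
theorem mem_collinSet {x z : P} : z ∈ collinSet mem x ↔ Collin mem z x := by
  simp [collinSet]

@[simp]
theorem mem_farSet {p q z : P} :
    z ∈ farSet mem p q ↔ z ≠ p ∧ z ≠ q ∧ ¬Collin mem z p ∧ ¬Collin mem z q := by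
  simp [farSet]

theorem natCard_setOf (p : P → Prop) [DecidablePred p] : Nat.card {x | p x} = #{x | p x} :=
  Nat.card_eq_fintype_card.trans (Fintype.card_subtype p)

theorem natCard_subtype_setOf (H : Set P) (p : P → Prop) [DecidablePred (· ∈ H)]
    [DecidablePred p] : Nat.card {x : H | p x} = #{x | x ∈ H ∧ p x} :=
  (Nat.card_congr (Equiv.subtypeSubtypeEquivSubtypeInter (· ∈ H) p)).trans
    (natCard_setOf fun x => x ∈ H ∧ p x)

theorem card_filter_collin_mem (S : Finset P) {r : P} {l : L} (hr : mem r l) :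
    #{z ∈ S ∩ collinSet mem r | mem z l} = #{z ∈ S | mem z l} - if r ∈ S then 1 else 0 := by
  have hset : {z ∈ S ∩ collinSet mem r | mem z l} = {z ∈ S | mem z l}.erase r := by
    ext z
    simp only [mem_filter, mem_inter, mem_collinSet, mem_erase]
    exact ⟨fun ⟨⟨hzS, hzr⟩, hzl⟩ => ⟨hzr.1, hzS, hzl⟩,
      fun ⟨hzr, hzS, hzl⟩ => ⟨⟨hzS, hzr, l, hzl, hr⟩, hzl⟩⟩
  rw [hset, card_erase_eq_ite]
  by_cases hrS : r ∈ S <;> simp [hrS, hr]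

theorem card_inter_collinSet_eq_sum (A : Finset P) (x : P) :
    #(A ∩ collinSet mem x) = ∑ y ∈ A, if Collin mem x y then 1 else 0 := by
  rw [← card_filter]
  congr 1
  ext y
  simp only [mem_inter, mem_collinSet, mem_filter]
  exact and_congr_right fun _ => collin_comm

theorem sum_card_inter_collinSet_comm (Z T : Finset P) :
    ∑ w ∈ Z, #(T ∩ collinSet mem w) = ∑ r ∈ T, #(Z ∩ collinSet mem r) := by
  simp_rw [card_inter_collinSet_eq_sum]
  rw [sum_comm]
  exact sum_congr rfl fun r _ => sum_congr rfl fun w _ => by rw [collin_comm]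

theorem sum_card_inter_collinSet_sq (Z T : Finset P) :
    ∑ w ∈ Z, #(T ∩ collinSet mem w) ^ 2
      = ∑ r ∈ T, ∑ r' ∈ T, #(Z ∩ collinSet mem r ∩ collinSet mem r') := by
  have hcount₂ (r r' : P) : #(Z ∩ collinSet mem r ∩ collinSet mem r')
      = ∑ w ∈ Z, (if Collin mem w r then 1 else 0) * (if Collin mem w r' then 1 else 0) := by
    simp_rw [ite_zero_mul_ite_zero, mul_one, ← card_filter]
    congr 1
    ext w
    simp only [mem_inter, mem_collinSet, mem_filter]
    rw [and_assoc]
  simp_rw [hcount₂, card_inter_collinSet_eq_sum, sq, sum_mul_sum]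
  rw [sum_comm]
  exact sum_congr rfl fun r _ => sum_comm

theorem card_inter_farSet_add (S : Finset P) {p q : P} (hnc : ¬Collin mem p q) :
    #(S ∩ farSet mem p q) + #(S ∩ {p, q}) + (#(S ∩ collinSet mem p) + #(S ∩ collinSet mem q))
      = #S + #(S ∩ collinSet mem p ∩ collinSet mem q) := by
  have hdisj : Disjoint ({p, q} : Finset P) (collinSet mem p ∪ collinSet mem q) := by
    simp only [disjoint_insert_left, disjoint_singleton_left, mem_union, mem_collinSet, not_or]
    exact ⟨⟨fun h => h.1 rfl, hnc⟩, fun h => hnc h.symm, fun h => h.1 rfl⟩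
  have hfar : S ∩ farSet mem p q = S \ ({p, q} ∪ (collinSet mem p ∪ collinSet mem q)) := by
    ext z
    simp
  have hinter : S ∩ collinSet mem p ∩ (S ∩ collinSet mem q)
      = S ∩ collinSet mem p ∩ collinSet mem q := by
    ext z
    simp only [mem_inter]
    tauto
  have hsplit := card_sdiff_add_card_inter S ({p, q} ∪ (collinSet mem p ∪ collinSet mem q))
  rw [inter_union_distrib_left, card_union_of_disjoint (disjoint_of_subset_left inter_subset_right
    (disjoint_of_subset_right inter_subset_right hdisj)), inter_union_distrib_left] at hsplit
  have hpq := card_union_add_card_inter (S ∩ collinSet mem p) (S ∩ collinSet mem q)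
  rw [hinter] at hpq
  rw [hfar]
  omega

end Incidence

theorem Finset.eq_of_sum_eq_of_sum_sq_eq {ι R : Type*} [CommRing R] [LinearOrder R]
    [IsStrictOrderedRing R] {s : Finset ι} {f : ι → R} {k : R}
    (h₁ : ∑ i ∈ s, f i = #s * k) (h₂ : ∑ i ∈ s, f i ^ 2 = #s * k ^ 2) {i : ι} (hi : i ∈ s) :
    f i = k := by
  have hvar : ∑ i ∈ s, (f i - k) ^ 2 = 0 := by
    simp_rw [sub_sq, sum_add_distrib, sum_sub_distrib, ← sum_mul, ← mul_sum, h₁, h₂, sum_const,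
      nsmul_eq_mul]
    ring
  have hi0 := (sum_eq_zero_iff_of_nonneg fun i _ => sq_nonneg (f i - k)).1 hvar i hi
  exact sub_eq_zero.1 (pow_eq_zero_iff two_ne_zero |>.1 hi0)

namespace IsGQ

variable {P L : Type*} {mem : P → L → Prop} {s t : ℕ}

theorem mem_of_collin_of_collin (h : IsGQ mem s t) {a b z : P} {l : L} (ha : mem a l)
    (hb : mem b l) (hab : a ≠ b) (hza : Collin mem z a) (hzb : Collin mem z b) : mem z l := by
  by_contra hz
  obtain ⟨w, -, hw⟩ := h.2.2.2 z l hz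
  exact hab ((hw a ⟨ha, hza⟩).trans (hw b ⟨hb, hzb⟩).symm)

theorem mem_iff_eq_or_collin (h : IsGQ mem s t) {r x z : P} {l : L} (hr : mem r l)
    (hx : mem x l) (hrx : r ≠ x) (hzr : Collin mem z r) : mem z l ↔ z = x ∨ Collin mem z x := by
  refine ⟨fun hz => ?_, ?_⟩
  · rcases eq_or_ne z x with rfl | hzx
    · exact Or.inl rfl
    · exact Or.inr ⟨hzx, l, hz, hx⟩
  · rintro (rfl | hzx)
    · exact hx
    · exact h.mem_of_collin_of_collin hr hx hrx hzr hzx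

theorem not_collin_of_common_collin (h : IsGQ mem s t) {p q r r' : P} (hpq : p ≠ q)
    (hnc : ¬Collin mem p q) (hrp : Collin mem r p) (hrq : Collin mem r q)
    (hr'p : Collin mem r' p) (hr'q : Collin mem r' q) : ¬Collin mem r r' := by
  rintro ⟨hrr', l, hr, hr'⟩
  exact hnc ⟨hpq, l, h.mem_of_collin_of_collin hr hr' hrr' hrp.symm hr'p.symm,
    h.mem_of_collin_of_collin hr hr' hrr' hrq.symm hr'q.symm⟩

theorem card_lines_through [Fintype L] (h : IsGQ mem s t) (x : P) : #{l | mem x l} = t + 1 :=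
  (natCard_setOf _).symm.trans (h.2.2.1 x)

theorem card_mul_eq_card_lines_mul [Fintype L] (h : IsGQ mem s t) {S : Finset P} {c : ℕ}
    (hS : ∀ l, #{z ∈ S | mem z l} = c) : #S * (t + 1) = #(univ : Finset L) * c := by
  have hdouble := sum_card_bipartiteAbove_eq_sum_card_bipartiteBelow (s := S)
    (t := (univ : Finset L)) (r := mem)
  simp only [bipartiteAbove, bipartiteBelow] at hdouble
  rwa [sum_const_nat fun x _ => h.card_lines_through x, sum_const_nat fun l _ => hS l] at hdouble

theorem one_le_of_mem [Fintype L] (h : IsGQ mem s t) {S : Finset P} {c : ℕ}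
    (hS : ∀ l, #{z ∈ S | mem z l} = c) {x : P} (hx : x ∈ S) : 1 ≤ c := by
  obtain ⟨l, hl⟩ : ({l | mem x l} : Finset L).Nonempty :=
    card_pos.1 (by rw [h.card_lines_through]; omega)
  rw [← hS l]
  exact card_pos.2 ⟨x, mem_filter.2 ⟨hx, (mem_filter.1 hl).2⟩⟩

variable [Fintype P]

theorem card_points_on (h : IsGQ mem s t) (l : L) : #{z | mem z l} = s + 1 :=
  (natCard_setOf _).symm.trans (h.2.1 l)

variable [Fintype L]

theorem card_inter_collinSet_eq_sum_lines (h : IsGQ mem s t) (S : Finset P) (x : P) :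
    #(S ∩ collinSet mem x) = ∑ l ∈ {l | mem x l}, #{z ∈ S ∩ collinSet mem x | mem z l} := by
  rw [← card_biUnion]
  · congr 1
    ext z
    simp only [mem_inter, mem_collinSet, mem_biUnion, mem_filter, mem_univ, true_and]
    exact ⟨fun ⟨hzS, hzx⟩ => ⟨hzx.2.choose, hzx.2.choose_spec.2, ⟨hzS, hzx⟩,
      hzx.2.choose_spec.1⟩, fun ⟨_, _, hz, _⟩ => hz⟩
  · intro l hl l' hl' hll'
    simp only [coe_filter, mem_univ, true_and, Set.mem_ofPred_eq] at hl hl'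
    refine disjoint_left.2 fun z hz hz' => hll' ?_
    simp only [mem_filter, mem_inter, mem_collinSet] at hz hz'
    exact h.1 z x l l' hz.1.2.1 hz.2 hl hz'.2 hl'

theorem card_inter_collinSet (h : IsGQ mem s t) {S : Finset P} {c : ℕ}
    (hS : ∀ l, #{z ∈ S | mem z l} = c) (x : P) :
    #(S ∩ collinSet mem x) = (t + 1) * (c - if x ∈ S then 1 else 0) := by
  rw [h.card_inter_collinSet_eq_sum_lines, sum_const_nat fun l hl => ?_, h.card_lines_through]
  rw [card_filter_collin_mem S (mem_filter.1 hl).2, hS]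

theorem card_collinSet (h : IsGQ mem s t) (x : P) : #(collinSet mem x) = (t + 1) * s := by
  simpa using h.card_inter_collinSet h.card_points_on x

theorem card_collinSet_inter_collinSet (h : IsGQ mem s t) {p q : P} (hpq : p ≠ q)
    (hnc : ¬Collin mem p q) : #(collinSet mem p ∩ collinSet mem q) = t + 1 := by
  rw [inter_comm, h.card_inter_collinSet_eq_sum_lines, sum_const_nat fun l hl => ?_,
    h.card_lines_through, mul_one]
  have hql : ¬mem q l := fun hq => hnc ⟨hpq, l, (mem_filter.1 hl).2, hq⟩
  obtain ⟨w, ⟨hwl, hqw⟩, hw⟩ := h.2.2.2 q l hql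
  refine card_eq_one.2 ⟨w, ext fun z => ?_⟩
  simp only [mem_filter, mem_inter, mem_collinSet, mem_singleton]
  refine ⟨fun ⟨⟨hzq, _⟩, hzl⟩ => hw z ⟨hzl, hzq.symm⟩, ?_⟩
  rintro rfl
  have hzp : z ≠ p := by
    rintro rfl
    exact hnc hqw.symm
  exact ⟨⟨hqw.symm, hzp, l, hwl, (mem_filter.1 hl).2⟩, hwl⟩

theorem card_filter_collin_not_mem (h : IsGQ mem s t) {S : Finset P} {c : ℕ}
    (hS : ∀ l, #{z ∈ S | mem z l} = c) {r : P} {l : L} (hr : mem r l) :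
    #{z ∈ S ∩ collinSet mem r | ¬mem z l} = t * (c - if r ∈ S then 1 else 0) := by
  have hsplit := card_filter_add_card_filter_not (s := S ∩ collinSet mem r) (mem · l)
  rw [card_filter_collin_mem S hr, hS, h.card_inter_collinSet hS] at hsplit
  rw [add_mul, one_mul] at hsplit
  omega

-- Of the `t + 1` lines through `r`, all but `rp` and `rq` lead into `farSet mem p q`.
theorem card_inter_farSet_inter_collinSet (h : IsGQ mem s t) {S : Finset P} {c : ℕ}
    (hS : ∀ l, #{z ∈ S | mem z l} = c) {p q r : P} (hpq : p ≠ q) (hnc : ¬Collin mem p q)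
    (hr : r ∈ collinSet mem p ∩ collinSet mem q) :
    #(S ∩ farSet mem p q ∩ collinSet mem r) + (c - if r ∈ S then 1 else 0)
      = t * (c - if r ∈ S then 1 else 0) := by
  obtain ⟨hrp, hrq⟩ : Collin mem r p ∧ Collin mem r q := by simpa using hr
  obtain ⟨l₁, hrl₁, hpl₁⟩ := hrp.2
  obtain ⟨l₂, hrl₂, hql₂⟩ := hrq.2
  have hsplit := card_filter_add_card_filter_not
    (s := {z ∈ S ∩ collinSet mem r | ¬mem z l₁}) (mem · l₂)
  rw [h.card_filter_collin_not_mem hS hrl₁] at hsplit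
  have hl₂ : {z ∈ {z ∈ S ∩ collinSet mem r | ¬mem z l₁} | mem z l₂}
      = {z ∈ S ∩ collinSet mem r | mem z l₂} := by
    rw [filter_filter]
    refine filter_congr fun z hz => and_iff_right_of_imp fun hz₂ hz₁ => ?_
    have hzr : z ≠ r := (mem_collinSet.1 (mem_inter.1 hz).2).1
    exact hnc ⟨hpq, l₁, hpl₁, h.1 z r l₁ l₂ hzr hz₁ hrl₁ hz₂ hrl₂ ▸ hql₂⟩
  have hfar : {z ∈ {z ∈ S ∩ collinSet mem r | ¬mem z l₁} | ¬mem z l₂}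
      = S ∩ farSet mem p q ∩ collinSet mem r := by
    ext z
    simp only [mem_filter, mem_inter, mem_collinSet, mem_farSet]
    by_cases hzr : Collin mem z r
    · rw [h.mem_iff_eq_or_collin hrl₁ hpl₁ hrp.1 hzr, h.mem_iff_eq_or_collin hrl₂ hql₂ hrq.1 hzr]
      tauto
    · simp [hzr]
  rw [hl₂, hfar, card_filter_collin_mem S hrl₂, hS] at hsplit
  omega

theorem card_farSet_inter_collinSet (h : IsGQ mem s t) {p q r : P} (hpq : p ≠ q)
    (hnc : ¬Collin mem p q) (hr : r ∈ collinSet mem p ∩ collinSet mem q) :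
    #(farSet mem p q ∩ collinSet mem r) + s = t * s := by
  simpa using h.card_inter_farSet_inter_collinSet h.card_points_on hpq hnc hr

theorem card_farSet_inter_collinSet_inter_collinSet (h : IsGQ mem s t) {p q r r' : P}
    (hpq : p ≠ q) (hnc : ¬Collin mem p q) (hr : r ∈ collinSet mem p ∩ collinSet mem q)
    (hr' : r' ∈ collinSet mem p ∩ collinSet mem q) (hrr' : r ≠ r') :
    #(farSet mem p q ∩ collinSet mem r ∩ collinSet mem r') + 2 = t + 1 := by
  simp only [mem_inter, mem_collinSet] at hr hr'
  have hnc' := h.not_collin_of_common_collin hpq hnc hr.1 hr.2 hr'.1 hr'.2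
  have hsplit : collinSet mem r ∩ collinSet mem r'
      = farSet mem p q ∩ collinSet mem r ∩ collinSet mem r' ∪ {p, q} := by
    ext z
    simp only [mem_union, mem_inter, mem_collinSet, mem_farSet, mem_insert, mem_singleton]
    refine ⟨fun ⟨hzr, hzr'⟩ => ?_, ?_⟩
    · by_cases hz : z = p ∨ z = q
      · exact Or.inr hz
      · have hzp := h.not_collin_of_common_collin hrr' hnc' hzr hzr' hr.1.symm hr'.1.symm
        have hzq := h.not_collin_of_common_collin hrr' hnc' hzr hzr' hr.2.symm hr'.2.symm
        obtain ⟨hzp', hzq'⟩ := not_or.1 hz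
        exact Or.inl ⟨⟨⟨hzp', hzq', hzp, hzq⟩, hzr⟩, hzr'⟩
    · rintro (⟨⟨-, hzr⟩, hzr'⟩ | rfl | rfl)
      exacts [⟨hzr, hzr'⟩, ⟨hr.1.symm, hr'.1.symm⟩, ⟨hr.2.symm, hr'.2.symm⟩]
  rw [← h.card_collinSet_inter_collinSet hrr' hnc', hsplit, card_union_of_disjoint, card_pair hpq]
  simp [disjoint_insert_right]

theorem card_farSet_self (h : IsGQ mem s t) (x : P) : #(farSet mem x x) = s ^ 2 * t := by
  have hleft : ∀ z ∈ farSet mem x x, #(collinSet mem x ∩ collinSet mem z) = t + 1 := by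
    intro z hz
    rw [mem_farSet] at hz
    exact h.card_collinSet_inter_collinSet hz.1.symm fun hxz => hz.2.2.1 hxz.symm
  have hright : ∀ y ∈ collinSet mem x, #(farSet mem x x ∩ collinSet mem y) = t * s := by
    intro y hy
    obtain ⟨hyx, l, hyl, hxl⟩ := mem_collinSet.1 hy
    have hfar : farSet mem x x ∩ collinSet mem y = {z ∈ univ ∩ collinSet mem y | ¬mem z l} := by
      ext z
      simp only [mem_inter, mem_farSet, mem_collinSet, mem_filter, mem_univ, true_and]
      by_cases hzy : Collin mem z y
      · rw [h.mem_iff_eq_or_collin hyl hxl hyx hzy]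
        tauto
      · simp [hzy]
    rw [hfar, h.card_filter_collin_not_mem h.card_points_on hyl]
    simp
  have hdouble := sum_card_inter_collinSet_comm (mem := mem) (farSet mem x x) (collinSet mem x)
  rw [sum_const_nat hleft, sum_const_nat hright, h.card_collinSet] at hdouble
  refine Nat.eq_of_mul_eq_mul_right (by positivity : 0 < t + 1) ?_
  rw [hdouble]
  ring

theorem card_univ (h : IsGQ mem s t) [Nonempty P] :
    #(univ : Finset P) = (s + 1) * (s * t + 1) := by
  obtain ⟨x⟩ := ‹Nonempty P›
  have hpart := card_inter_farSet_add (univ : Finset P) (mem := mem) (p := x) (q := x)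
    fun hxx => hxx.1 rfl
  simp only [univ_inter, pair_eq_singleton, card_singleton, inter_self, h.card_farSet_self,
    h.card_collinSet] at hpart
  linarith

theorem card_eq_of_card_filter_mem_eq (h : IsGQ mem s t) [Nonempty P] {S : Finset P} {c : ℕ}
    (hS : ∀ l, #{z ∈ S | mem z l} = c) : #S = c * (s * t + 1) := by
  have hSL := h.card_mul_eq_card_lines_mul hS
  have hPL := h.card_mul_eq_card_lines_mul h.card_points_on
  rw [h.card_univ] at hPL
  refine Nat.eq_of_mul_eq_mul_right (by positivity : 0 < (t + 1) * (s + 1)) ?_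
  calc #S * ((t + 1) * (s + 1)) = #(univ : Finset L) * (s + 1) * c := by rw [← mul_assoc, hSL]; ring
    _ = _ := by rw [← hPL]; ring

theorem sum_card_inter_farSet_inter_collinSet (h : IsGQ mem s t) {S : Finset P} {c : ℕ}
    (hS : ∀ l, #{z ∈ S | mem z l} = c) {p q : P} (hpq : p ≠ q) (hnc : ¬Collin mem p q) :
    ∑ r ∈ collinSet mem p ∩ collinSet mem q, (#(S ∩ farSet mem p q ∩ collinSet mem r) : ℤ)
      = (t - 1) * ((t + 1) * c - #(S ∩ (collinSet mem p ∩ collinSet mem q))) := by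
  have hr : ∀ r ∈ collinSet mem p ∩ collinSet mem q, (#(S ∩ farSet mem p q ∩ collinSet mem r) : ℤ)
      = (t - 1) * (c - if r ∈ S then 1 else 0) := by
    intro r hr
    have hδ : (if r ∈ S then 1 else 0) ≤ c := by
      split_ifs with hrS
      exacts [h.one_le_of_mem hS hrS, Nat.zero_le c]
    have hcount := h.card_inter_farSet_inter_collinSet hS hpq hnc hr
    zify [hδ] at hcount
    linear_combination hcount
  rw [sum_congr rfl hr, ← mul_sum, sum_sub_distrib, sum_const, nsmul_eq_mul, sum_boole,
    filter_mem_eq_inter, inter_comm _ S, h.card_collinSet_inter_collinSet hpq hnc]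
  push_cast
  ring

theorem sum_card_farSet_inter_collinSet_inter_collinSet (h : IsGQ mem s t) {p q r : P}
    (hpq : p ≠ q) (hnc : ¬Collin mem p q) (hr : r ∈ collinSet mem p ∩ collinSet mem q) :
    ∑ r' ∈ collinSet mem p ∩ collinSet mem q,
      (#(farSet mem p q ∩ collinSet mem r ∩ collinSet mem r') : ℤ) = (t - 1) * s + t * (t - 1) := by
  have hdiag := h.card_farSet_inter_collinSet hpq hnc hr
  have hoff : ∀ r' ∈ (collinSet mem p ∩ collinSet mem q).erase r,
      (#(farSet mem p q ∩ collinSet mem r ∩ collinSet mem r') : ℤ) = t - 1 := by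
    intro r' hr'
    have hcount := h.card_farSet_inter_collinSet_inter_collinSet hpq hnc hr (mem_of_mem_erase hr')
      (ne_of_mem_erase hr').symm
    zify at hcount
    linear_combination hcount
  rw [← add_sum_erase _ _ hr, inter_assoc, inter_self, sum_congr rfl hoff, sum_const,
    card_erase_of_mem hr, h.card_collinSet_inter_collinSet hpq hnc]
  zify at hdiag
  push_cast
  linear_combination hdiag

theorem card_inter_collinSet_of_mem_farSet (h : IsGQ mem s (s ^ 2)) {p q z : P} (hpq : p ≠ q)
    (hnc : ¬Collin mem p q) (hz : z ∈ farSet mem p q) :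
    #(collinSet mem p ∩ collinSet mem q ∩ collinSet mem z) = s + 1 := by
  have : Nonempty P := ⟨p⟩
  have hT := h.card_collinSet_inter_collinSet hpq hnc
  have hZ := card_inter_farSet_add (univ : Finset P) hnc
  simp only [univ_inter, h.card_univ, h.card_collinSet, card_pair hpq, hT] at hZ
  zify at hZ
  set T := collinSet mem p ∩ collinSet mem q
  set Z := farSet mem p q
  have hZr : ∀ r ∈ T, (#(Z ∩ collinSet mem r) : ℤ) = s ^ 3 - s := by
    intro r hr
    have hcount := h.card_farSet_inter_collinSet hpq hnc hr
    zify at hcount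
    linear_combination hcount
  have hM₁ : ∑ w ∈ Z, (#(T ∩ collinSet mem w) : ℤ) = #Z * (s + 1) := by
    rw [← Nat.cast_sum, sum_card_inter_collinSet_comm, Nat.cast_sum, sum_congr rfl hZr, sum_const,
      hT]
    linear_combination (-(s : ℤ) - 1) * hZ
  have hM₂ : ∑ w ∈ Z, (#(T ∩ collinSet mem w) : ℤ) ^ 2 = #Z * (s + 1) ^ 2 := by
    have hsq : ∑ w ∈ Z, (#(T ∩ collinSet mem w) : ℤ) ^ 2
        = ∑ r ∈ T, ∑ r' ∈ T, (#(Z ∩ collinSet mem r ∩ collinSet mem r') : ℤ) := by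
      exact_mod_cast sum_card_inter_collinSet_sq Z T
    rw [hsq, sum_congr rfl fun r hr => h.sum_card_farSet_inter_collinSet_inter_collinSet hpq hnc hr,
      sum_const, hT]
    push_cast
    linear_combination (-((s : ℤ) + 1) ^ 2) * hZ
  exact_mod_cast eq_of_sum_eq_of_sum_sq_eq hM₁ hM₂ hz

theorem card_inter_farSet_mul (h : IsGQ mem s (s ^ 2)) {S : Finset P} {c : ℕ}
    (hS : ∀ l, #{z ∈ S | mem z l} = c) {p q : P} (hpq : p ≠ q) (hnc : ¬Collin mem p q) :
    (#(S ∩ farSet mem p q) : ℤ) * (s + 1)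
      = (s ^ 2 - 1) * ((s ^ 2 + 1) * c - #(S ∩ (collinSet mem p ∩ collinSet mem q))) := by
  have hdouble := sum_card_inter_collinSet_comm (mem := mem) (S ∩ farSet mem p q)
    (collinSet mem p ∩ collinSet mem q)
  rw [sum_const_nat fun w hw =>
    h.card_inter_collinSet_of_mem_farSet hpq hnc (mem_inter.1 hw).2] at hdouble
  have hsum := h.sum_card_inter_farSet_inter_collinSet hS hpq hnc
  push_cast at hsum
  rw [← Nat.cast_sum, ← hdouble] at hsum
  exact_mod_cast hsum

theorem card_inter_collinSet_inter_collinSet_of_hemisystem (h : IsGQ mem s (s ^ 2))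
    {S : Finset P} {c : ℕ} (hS : ∀ l, #{z ∈ S | mem z l} = c) (hc : 2 * c = s + 1) {p q : P}
    (hp : p ∈ S) (hq : q ∈ S) (hpq : p ≠ q) (hnc : ¬Collin mem p q) :
    #(S ∩ (collinSet mem p ∩ collinSet mem q)) = (s - 1) ^ 2 / 2 := by
  have : Nonempty P := ⟨p⟩
  have hedges := h.card_inter_farSet_mul hS hpq hnc
  have hpart := card_inter_farSet_add S hnc
  rw [inter_eq_right.2 (insert_subset hp (singleton_subset_iff.2 hq)), card_pair hpq,
    h.card_inter_collinSet hS, h.card_inter_collinSet hS, if_pos hp, if_pos hq,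
    h.card_eq_of_card_filter_mem_eq hS, inter_assoc] at hpart
  obtain ⟨a, rfl⟩ : ∃ a, c = a + 1 := ⟨c - 1, by omega⟩
  obtain rfl : s = 2 * a + 1 := by omega
  have hsq : (2 * a + 1 - 1) ^ 2 / 2 = 2 * a ^ 2 := by
    rw [Nat.add_sub_cancel, mul_pow, show 2 ^ 2 = 2 * 2 by rfl, mul_assoc,
      Nat.mul_div_cancel_left _ two_pos]
  rw [hsq]
  zify at hpart ⊢
  push_cast at hedges
  simp only [add_tsub_cancel_right] at hpart
  have hzero : ((2 * a + 1) * (2 * a + 2) : ℤ)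
      * (#(S ∩ (collinSet mem p ∩ collinSet mem q)) - 2 * a ^ 2) = 0 := by
    linear_combination hedges - (2 * (a : ℤ) + 2) * hpart
  have hne : ((2 * a + 1) * (2 * a + 2) : ℤ) ≠ 0 := by positivity
  linear_combination (mul_eq_zero.1 hzero).resolve_left hne

end IsGQ

theorem stmt_9_general {P L : Type*} [Fintype P] [Fintype L] (s : ℕ)
    (hodd : Odd s) (mem : P → L → Prop) (hgq : IsGQ mem s (s ^ 2))
    (H : Set P)
    -- `H` is a hemisystem of points: every line contains exactly `(s+1)/2` points of `H`
    (hhemi : ∀ l : L, Nat.card {p : P | p ∈ H ∧ mem p l} = (s + 1) / 2) :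
    IsPQ (fun (p : H) (l : L) => mem p.1 l) ((s - 1) / 2) (s ^ 2) ((s - 1) ^ 2 / 2) := by
  have hc : 2 * ((s + 1) / 2) = s + 1 := by
    obtain ⟨k, rfl⟩ := hodd
    omega
  have hS : ∀ l, #{z ∈ ({x | x ∈ H} : Finset P) | mem z l} = (s + 1) / 2 := fun l => by
    rw [← hhemi l, natCard_setOf, filter_filter]
  refine ⟨fun p q l l' hpq => hgq.1 p q l l' (Subtype.coe_ne_coe.2 hpq), ?_, fun l => ?_,
    fun p => hgq.2.2.1 p, fun p q hpq hnc => ?_⟩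
  · rintro p q r ⟨hpq, l, hp, hq⟩ hqr hpr
    exact ⟨l, hp, hq, hgq.mem_of_collin_of_collin hp hq (Subtype.coe_ne_coe.2 hpq)
      (collin_subtype_iff.1 hpr).symm (collin_subtype_iff.1 hqr).symm⟩
  · rw [natCard_subtype_setOf H (mem · l), ← natCard_setOf, hhemi l]
    omega
  · simp only [collin_subtype_iff]
    rw [natCard_subtype_setOf H fun x => Collin mem x p ∧ Collin mem x q,
      ← hgq.card_inter_collinSet_inter_collinSet_of_hemisystem hS hc (by simp) (by simp)
        (Subtype.coe_ne_coe.2 hpq) fun h => hnc (collin_subtype_iff.2 h)]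
    congr 1
    ext x
    simp

theorem stmt_9 {P L : Type*} [Fintype P] [Fintype L] (s : ℕ) (hs : 1 < s)
    (hodd : Odd s) (mem : P → L → Prop) (hgq : IsGQ mem s (s ^ 2))
    (H : Set P)
    -- `H` is a hemisystem of points: every line contains exactly `(s+1)/2` points of `H`
    (hhemi : ∀ l : L, Nat.card {p : P | p ∈ H ∧ mem p l} = (s + 1) / 2) :
    IsPQ (fun (p : H) (l : L) => mem p.1 l) ((s - 1) / 2) (s ^ 2) ((s - 1) ^ 2 / 2) :=
  stmt_9_general s hodd mem hgq H hhemi
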